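/- For positive integers m, n with 2m ≤ n and m ≥ 1, the equality C(n, 2m) = C(n-2m+2, 2) holds if and only if n = 2m or m = 1. -/
import Mathlib

lemma pfaffian_aux_key (k : ℕ) (hk : 1 ≤ k) : (k + 2).choose 2 < (k + 4).choose 4 := by
  have h2 : (k + 2).choose 2 * 2 = (k + 2) * (k + 1) := by
    have := Nat.choose_eq_descFactorial_div_factorial (k + 2) 2
    have hd : (k + 2).descFactorial 2 = (k + 2) * (k + 1) := by
      simp [Nat.descFactorial]; ring
    have hdvd := Nat.factorial_dvd_descFactorial (k + 2) 2
    rw [this, ← hd]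
    have : (Nat.factorial 2) = 2 := by decide
    rw [← this]
    exact Nat.div_mul_cancel hdvd
  have h4 : (k + 4).choose 4 * 24 = (k + 4) * (k + 3) * (k + 2) * (k + 1) := by
    have := Nat.choose_eq_descFactorial_div_factorial (k + 4) 4
    have hd : (k + 4).descFactorial 4 = (k + 4) * (k + 3) * (k + 2) * (k + 1) := by
      simp [Nat.descFactorial]; ring
    have hdvd := Nat.factorial_dvd_descFactorial (k + 4) 4
    rw [this, ← hd]
    have : (Nat.factorial 4) = 24 := by decide
    rw [← this]
    exact Nat.div_mul_cancel hdvd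
  nlinarith [h2, h4, sq_nonneg k, hk]

/-- For positive integers `m, n` with `2m ≤ n`, the equality `C(n, 2m) = C(n - 2m + 2, 2)`
(minimal number of generators of `Pf_m(Y)` equals its height, i.e. `B_m(n)` is a complete
intersection) holds if and only if `n = 2m` or `m = 1`. -/
theorem pfaffian_complete_intersection_criterion (m n : ℕ) (hm : 1 ≤ m) (h : 2 * m ≤ n) :
    n.choose (2 * m) = (n - 2 * m + 2).choose 2 ↔ n = 2 * m ∨ m = 1 := by
  constructor
  · intro heq
    by_contra hc
    push_neg at hc
    obtain ⟨hn, hm1⟩ := hc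
    set k := n - 2 * m with hk
    have hk1 : 1 ≤ k := by omega
    have hm2 : 2 ≤ m := by omega
    have h1 : n.choose (2 * m) = n.choose k := by
      rw [hk]; exact (Nat.choose_symm h).symm
    have h2 : (k + 4).choose k ≤ n.choose k := Nat.choose_le_choose k (by omega)
    have h3 : (k + 4).choose k = (k + 4).choose 4 := by
      have := Nat.choose_symm (show 4 ≤ k + 4 by omega)
      simpa using this
    have h5 := pfaffian_aux_key k hk1
    have h6 : n - 2 * m + 2 = k + 2 := by omega
    rw [h6] at heq
    omega
  · rintro (h' | h')
    · subst h'
      simp [Nat.choose_self]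
    · subst h'
      have : n - 2 * 1 + 2 = n := by omega
      rw [this]
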